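/- arXiv:1112.5769 — 2 statements merged into one kernel-verified Lean document; each statement's English description precedes it below -/
import Mathlib

section
/- Suppose $A = (a_1,\dots,a_q)$ and $B = (b_1,\dots,b_q)$ are tuples of positive reals with $0 < a_1 \leq \cdots \leq a_q$, $0 < b_1 \leq \cdots \leq b_q$, and $\sum_{i=1}^k a_i \leq \sum_{i=1}^k b_i$ for all $k = 1,\dots,q$ (i.e., $B$ is weakly supermajorized by $A$). Then for every $k = 1, \dots, q$, $e_k(b_1,\dots,b_q)/e_{k-1}(b_1,\dots,b_q) \geq e_k(a_1,\dots,a_q)/e_{k-1}(a_1,\dots,a_q)$, where $e_k$ is the $k$-th elementary symmetric polynomial and $e_0 = 1$. Equivalently, the chain of inequalities $\frac{e_q(B)}{e_q(A)} \geq \frac{e_{q-1}(B)}{e_{q-1}(A)} \geq \cdots \geq \frac{e_1(B)}{e_1(A)} \geq 1$ holds. -/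
open Finset

/-- `k`-th elementary symmetric polynomial of `x : Fin q → ℝ` (`e_0 = 1`). -/
noncomputable def esymm (q k : ℕ) (x : Fin q → ℝ) : ℝ :=
  ∑ s ∈ Finset.powersetCard k (Finset.univ : Finset (Fin q)), ∏ i ∈ s, x i

/-!
The ratio `r = e_{k+1} / e_k` increases when one coordinate increases, and when mass `δ` is
moved from a larger coordinate to a smaller one without reversing their order. Isolating the
coordinates that move writes `r` as `(A + t B) / (C + t D)`, where `t` is the moving coordinate,
resp. the product of the two moving coordinates (their sum being fixed), and `A, B, C, D` only
involve the other variables. This is increasing in `t` because `A D ≤ B C` is Newton's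
inequality `e_i e_{j+2} ≤ e_{i+1} e_{j+1}` for those variables.

Weak supermajorization lets one walk from `A` to `B` by such moves, each making one more
coordinate agree with `B`: if `A ≤ B` pointwise, raise the last coordinate where `A < B`;
otherwise move mass from the first coordinate where `A > B` to the last earlier one where
`A < B`, which exists because the prefix sums of `A` are at most those of `B`.
-/
theorem add_mul_div_add_mul_le {K : Type*} [Field K] [LinearOrder K] [IsStrictOrderedRing K]
    {A B C D t t' : K} (ht : 0 < C + t * D) (ht' : 0 < C + t' * D) (h : A * D ≤ B * C)
    (htt' : t ≤ t') : (A + t * B) / (C + t * D) ≤ (A + t' * B) / (C + t' * D) := by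
  rw [div_le_div_iff₀ ht ht']
  nlinarith [mul_le_mul_of_nonneg_left h (sub_nonneg.mpr htt')]

namespace Multiset

section CommSemiring
variable {R : Type*} [CommSemiring R]

theorem esymm_zero_right (s : Multiset R) : s.esymm 0 = 1 := by
  simp [esymm]

theorem esymm_zero_succ (n : ℕ) : (0 : Multiset R).esymm (n + 1) = 0 := by
  simp [esymm, powersetCard_zero_right]

theorem esymm_cons_succ (a : R) (s : Multiset R) (n : ℕ) :
    (a ::ₘ s).esymm (n + 1) = s.esymm (n + 1) + a * s.esymm n := by
  simp [esymm, powersetCard_cons, map_map, sum_map_mul_left]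

theorem esymm_cons_cons_succ_succ (a b : R) (s : Multiset R) (n : ℕ) :
    (a ::ₘ b ::ₘ s).esymm (n + 2) =
      s.esymm (n + 2) + (a + b) * s.esymm (n + 1) + a * b * s.esymm n := by
  rw [esymm_cons_succ, esymm_cons_succ, esymm_cons_succ]
  ring

theorem esymm_cons_cons_one (a b : R) (s : Multiset R) :
    (a ::ₘ b ::ₘ s).esymm 1 = s.esymm 1 + (a + b) := by
  rw [esymm_cons_succ, esymm_cons_succ, esymm_zero_right, esymm_zero_right]
  ring

end CommSemiring

section OrderedRing
variable {R : Type*} [CommRing R] [LinearOrder R] [IsStrictOrderedRing R] {s : Multiset R}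

theorem esymm_nonneg (hs : ∀ x ∈ s, 0 ≤ x) (n : ℕ) : 0 ≤ s.esymm n := by
  refine sum_nonneg fun x hx => ?_
  obtain ⟨t, ht, rfl⟩ := mem_map.mp hx
  exact prod_nonneg fun y hy => hs y (mem_of_le (mem_powersetCard.mp ht).1 hy)

theorem esymm_pos (hs : ∀ x ∈ s, 0 < x) {n : ℕ} (hn : n ≤ card s) : 0 < s.esymm n := by
  induction s using Multiset.induction generalizing n with
  | empty => simp_all [esymm_zero_right]
  | cons a s ih =>
    rcases n with _ | n
    · simp [esymm_zero_right]
    rw [esymm_cons_succ]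
    have hs' : ∀ x ∈ s, 0 < x := fun x hx => hs x (mem_cons_of_mem hx)
    have := esymm_nonneg (fun x hx => (hs' x hx).le) (n + 1)
    have := mul_pos (hs a (mem_cons_self a s)) (ih hs' (by simpa using hn))
    linarith

theorem esymm_mul_esymm_le (hs : ∀ x ∈ s, 0 ≤ x) {i j : ℕ} (hij : i ≤ j) :
    s.esymm i * s.esymm (j + 2) ≤ s.esymm (i + 1) * s.esymm (j + 1) := by
  induction s using Multiset.induction generalizing i j with
  | empty => simp [esymm_zero_succ]
  | cons a s ih =>
    have ha : 0 ≤ a := hs a (mem_cons_self a s)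
    have hs' : ∀ x ∈ s, 0 ≤ x := fun x hx => hs x (mem_cons_of_mem hx)
    have hnn := esymm_nonneg hs'
    have ih := @ih hs'
    rcases i with _ | i
    · have := ih (i := 0) (j := j) (Nat.zero_le j)
      simp only [esymm_cons_succ, esymm_zero_right, zero_add] at this ⊢
      nlinarith [mul_nonneg ha (mul_nonneg (hnn 1) (hnn j)), mul_nonneg (mul_nonneg ha ha) (hnn j)]
    obtain ⟨j, rfl⟩ : ∃ j', j = j' + 1 := ⟨j - 1, by omega⟩
    rw [esymm_cons_succ a s (i + 1), esymm_cons_succ a s i, esymm_cons_succ a s (j + 2),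
      esymm_cons_succ a s (j + 1)]
    have h11 := ih (i := i + 1) (j := j + 1) (by omega)
    have h00 := ih (i := i) (j := j) (by omega)
    -- even for `i = j` this cross term needs the hypothesis at some `i < j`, hence the general form
    have h02 : s.esymm i * s.esymm (j + 3) ≤ s.esymm (i + 2) * s.esymm (j + 1) := by
      rcases (show i = j ∨ i < j by omega) with rfl | hlt
      · simpa [mul_comm] using ih (i := i) (j := i + 1) (by omega)
      · exact (ih (j := j + 1) (by omega)).trans (ih (i := i + 1) (by omega))
    nlinarith [mul_le_mul_of_nonneg_left h02 ha, mul_le_mul_of_nonneg_left h00 (mul_nonneg ha ha)]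

end OrderedRing

section Field
variable {K : Type*} [Field K] [LinearOrder K] [IsStrictOrderedRing K] {s : Multiset K}

theorem esymm_succ_div_esymm_cons_le (hs : ∀ x ∈ s, 0 < x) {a b : K} (ha : 0 < a) (hab : a ≤ b)
    {n : ℕ} (hn : n ≤ card s + 1) :
    (a ::ₘ s).esymm (n + 1) / (a ::ₘ s).esymm n ≤ (b ::ₘ s).esymm (n + 1) / (b ::ₘ s).esymm n := by
  rcases n with _ | n
  · simp only [esymm_cons_succ, esymm_zero_right, div_one]
    linarith
  have hpos : ∀ c, 0 < c → 0 < s.esymm (n + 1) + c * s.esymm n := fun c hc => by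
    rw [← esymm_cons_succ]
    exact esymm_pos (by simpa [hc] using hs) (by simpa using hn)
  have newton := esymm_mul_esymm_le (fun x hx => (hs x hx).le) (le_refl n)
  rw [esymm_cons_succ a s (n + 1), esymm_cons_succ a s n, esymm_cons_succ b s (n + 1),
    esymm_cons_succ b s n]
  exact add_mul_div_add_mul_le (hpos a ha) (hpos b (ha.trans_le hab)) (by linarith) hab

theorem esymm_succ_div_esymm_cons_cons_le (hs : ∀ x ∈ s, 0 < x) {a b u v : K} (ha : 0 < a)
    (hb : 0 < b) (hu : 0 < u) (hv : 0 < v) (hsum : u + v = a + b) (hprod : a * b ≤ u * v)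
    {n : ℕ} (hn : n ≤ card s + 2) :
    (a ::ₘ b ::ₘ s).esymm (n + 1) / (a ::ₘ b ::ₘ s).esymm n ≤
      (u ::ₘ v ::ₘ s).esymm (n + 1) / (u ::ₘ v ::ₘ s).esymm n := by
  have hs' : ∀ x ∈ s, 0 ≤ x := fun x hx => (hs x hx).le
  have hab : 0 ≤ a + b := by positivity
  rcases n with _ | _ | n
  · rw [esymm_cons_cons_one, esymm_cons_cons_one, hsum, esymm_zero_right, esymm_zero_right]
  · rw [esymm_cons_cons_succ_succ, esymm_cons_cons_succ_succ, esymm_cons_cons_one,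
      esymm_cons_cons_one, hsum, esymm_zero_right]
    have := esymm_nonneg hs' 1
    gcongr
  have hpos : ∀ c d, 0 < c → 0 < d →
      0 < s.esymm (n + 2) + (a + b) * s.esymm (n + 1) + c * d * s.esymm n := fun c d hc hd => by
    have := mul_pos (mul_pos hc hd) (esymm_pos hs (show n ≤ card s by omega))
    nlinarith [esymm_nonneg hs' (n + 2), mul_nonneg hab (esymm_nonneg hs' (n + 1))]
  rw [esymm_cons_cons_succ_succ a b s (n + 1), esymm_cons_cons_succ_succ a b s n,
    esymm_cons_cons_succ_succ u v s (n + 1), esymm_cons_cons_succ_succ u v s n, hsum]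
  have newton₀ := esymm_mul_esymm_le hs' (le_refl n)
  have newton₁ := esymm_mul_esymm_le hs' (Nat.le_succ n)
  refine add_mul_div_add_mul_le (hpos a b ha hb) (hpos u v hu hv) ?_ hprod
  nlinarith [mul_le_mul_of_nonneg_left newton₀ hab]

end Field

end Multiset

theorem Finset.val_map_eq_cons_erase {ι α : Type*} [DecidableEq ι] {s : Finset ι} {i : ι}
    (hi : i ∈ s) (f : ι → α) : s.val.map f = f i ::ₘ (s.erase i).val.map f := by
  rw [← Multiset.map_cons, Finset.erase_val, Multiset.cons_erase hi]

theorem Multiset.forall_mem_map_pos {ι : Type*} {s : Multiset ι} {x : ι → ℝ}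
    (hx : ∀ m, 0 < x m) :
    ∀ y ∈ s.map x, 0 < y := by
  simpa using fun m _ => hx m

theorem esymm_eq_esymm_map_univ_val (q k : ℕ) (x : Fin q → ℝ) :
    esymm q k x = (univ.val.map x).esymm k :=
  (Finset.esymm_map_val x univ k).symm

theorem esymm_succ_div_esymm_le_add_single {q k : ℕ} (hk : k ≤ q) {x : Fin q → ℝ}
    (hx : ∀ m, 0 < x m) (i : Fin q) {δ : ℝ} (hδ : 0 ≤ δ) :
    esymm q (k + 1) x / esymm q k x ≤
      esymm q (k + 1) (x + Pi.single i δ) / esymm q k (x + Pi.single i δ) := by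
  have hrest : (univ.erase i).val.map (x + Pi.single i δ) = (univ.erase i).val.map x :=
    Multiset.map_congr rfl fun m hm => by
      simp [Pi.single_eq_of_ne (ne_of_mem_erase (Finset.mem_def.mpr hm))]
  have hcard : #(univ.erase i) + 1 = q := by
    rw [card_erase_of_mem (mem_univ i), card_univ, Fintype.card_fin]
    have := i.isLt
    omega
  simp only [esymm_eq_esymm_map_univ_val]
  rw [univ.val_map_eq_cons_erase (mem_univ i), univ.val_map_eq_cons_erase (mem_univ i), hrest]
  refine Multiset.esymm_succ_div_esymm_cons_le (Multiset.forall_mem_map_pos hx) (hx i)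
    (by simpa using hδ) ?_
  rwa [Multiset.card_map, card_val, hcard]

theorem esymm_succ_div_esymm_le_transfer {q k : ℕ} (hk : k ≤ q) {x : Fin q → ℝ}
    (hx : ∀ m, 0 < x m) {i j : Fin q} (hij : i ≠ j) {δ : ℝ} (hδ : 0 ≤ δ)
    (hle : x i + δ ≤ x j - δ) :
    esymm q (k + 1) x / esymm q k x ≤
      esymm q (k + 1) (x + Pi.single i δ - Pi.single j δ) /
        esymm q k (x + Pi.single i δ - Pi.single j δ) := by
  set x' := x + Pi.single i δ - Pi.single j δ
  have hj : j ∈ univ.erase i := mem_erase.mpr ⟨hij.symm, mem_univ j⟩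
  have hrest : ((univ.erase i).erase j).val.map x' = ((univ.erase i).erase j).val.map x :=
    Multiset.map_congr rfl fun m hm => by
      have hm := Finset.mem_def.mpr hm
      simp [x', Pi.single_eq_of_ne (ne_of_mem_erase hm),
        Pi.single_eq_of_ne (ne_of_mem_erase (mem_of_mem_erase hm))]
  simp only [esymm_eq_esymm_map_univ_val]
  rw [univ.val_map_eq_cons_erase (mem_univ i), univ.val_map_eq_cons_erase (mem_univ i),
    val_map_eq_cons_erase hj, val_map_eq_cons_erase hj, hrest]
  have hx'i : x' i = x i + δ := by simp [x', Pi.single_eq_of_ne hij]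
  have hx'j : x' j = x j - δ := by simp [x', Pi.single_eq_of_ne hij.symm]
  rw [hx'i, hx'j]
  have hcard : #((univ.erase i).erase j) + 2 = q := by
    rw [card_erase_of_mem hj, card_erase_of_mem (mem_univ i), card_univ, Fintype.card_fin]
    have := Fin.val_ne_of_ne hij
    omega
  refine Multiset.esymm_succ_div_esymm_cons_cons_le (Multiset.forall_mem_map_pos hx) (hx i)
    (hx j) (by linarith [hx i]) (by linarith [hx i]) (by ring) (by nlinarith) ?_
  rwa [Multiset.card_map, card_val, hcard]

section Majorization

theorem monotone_add_single {ι : Type*} [PartialOrder ι] [DecidableEq ι] {x : ι → ℝ}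
    (hx : Monotone x) {i : ι} {δ : ℝ} (hδ : 0 ≤ δ) (h : ∀ m, i < m → x i + δ ≤ x m) :
    Monotone (x + Pi.single i δ) := by
  intro m m' hmm'
  rcases eq_or_ne m i with rfl | hm
  · rcases eq_or_ne m' m with rfl | hm'
    · rfl
    simpa [Pi.single_eq_of_ne hm'] using h m' (lt_of_le_of_ne hmm' hm'.symm)
  · have hs : (0 : ι → ℝ) ≤ Pi.single i δ := Pi.single_nonneg.2 hδ
    simpa [Pi.single_eq_of_ne hm] using (hx hmm').trans (le_add_of_nonneg_right (hs m'))

theorem monotone_sub_single {ι : Type*} [PartialOrder ι] [DecidableEq ι] {y : ι → ℝ}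
    (hy : Monotone y) {j : ι} {δ : ℝ} (hδ : 0 ≤ δ) (h : ∀ m < j, y m ≤ y j - δ) :
    Monotone (y - Pi.single j δ) := by
  intro m m' hmm'
  rcases eq_or_ne m' j with rfl | hm'
  · rcases eq_or_ne m m' with rfl | hm
    · rfl
    simpa [Pi.single_eq_of_ne hm] using h m (lt_of_le_of_ne hmm' hm)
  · have hs : (0 : ι → ℝ) ≤ Pi.single j δ := Pi.single_nonneg.2 hδ
    simpa [Pi.single_eq_of_ne hm'] using (sub_le_self _ (hs m)).trans (hy hmm')

theorem sum_add_single_sub_single {ι : Type*} [DecidableEq ι] (x : ι → ℝ) {s : Finset ι}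
    {i j : ι} (hi : i ∈ s) (hj : j ∈ s) (δ : ℝ) :
    ∑ m ∈ s, (x + Pi.single i δ - Pi.single j δ : ι → ℝ) m = ∑ m ∈ s, x m := by
  simp [sum_add_distrib, sum_sub_distrib, sum_pi_single', hi, hj]

theorem card_filter_ne_lt {ι : Type*} [Fintype ι] {a a' b : ι → ℝ}
    (h : ∀ m, a' m ≠ b m → a m ≠ b m) {i : ι} (hi : a i ≠ b i) (hi' : a' i = b i) :
    #{m | a' m ≠ b m} < #{m | a m ≠ b m} := by
  refine card_lt_card ((ssubset_iff_of_subset fun m => ?_).2 ⟨i, ?_, ?_⟩)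
  · simpa using h m
  · simpa using hi
  · simpa using hi'

variable {q : ℕ}

def PrefixSumsLE (a b : Fin q → ℝ) : Prop :=
  ∀ k ≤ q, ∑ i ∈ univ.filter (fun i : Fin q => (i : ℕ) < k), a i ≤
    ∑ i ∈ univ.filter (fun i : Fin q => (i : ℕ) < k), b i

theorem PrefixSumsLE.of_le {a b : Fin q → ℝ} (h : ∀ m, a m ≤ b m) : PrefixSumsLE a b :=
  fun _ _ => sum_le_sum fun m _ => h m

theorem PrefixSumsLE.exists_lt_of_gt {a b : Fin q → ℝ} (hsum : PrefixSumsLE a b) {j : Fin q}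
    (hj : b j < a j) : ∃ i < j, a i < b i := by
  by_contra! h
  refine (hsum (j + 1) j.isLt).not_gt (sum_lt_sum (fun m hm => ?_) ⟨j, by simp, hj⟩)
  rcases (Nat.lt_succ_iff.mp (mem_filter.mp hm).2).lt_or_eq with hm | hm
  · exact h m hm
  · rw [Fin.ext hm]
    exact hj.le

theorem PrefixSumsLE.transfer {a b : Fin q → ℝ} (hsum : PrefixSumsLE a b) {i j : Fin q}
    (hij : i < j) (hle : ∀ m < j, a m ≤ b m) {δ : ℝ} (hi : a i + δ ≤ b i) :
    PrefixSumsLE (a + Pi.single i δ - Pi.single j δ) b := by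
  intro k hk
  by_cases hkj : k ≤ j
  · refine sum_le_sum fun m hm => ?_
    have hmj : m < j := Fin.lt_def.2 ((mem_filter.mp hm).2.trans_le hkj)
    rcases eq_or_ne m i with rfl | hmi
    · simpa [Pi.single_eq_of_ne hmj.ne] using hi
    · simpa [Pi.single_eq_of_ne hmi, Pi.single_eq_of_ne hmj.ne] using hle m hmj
  · rw [sum_add_single_sub_single a (by simp; omega) (by simp; omega)]
    exact hsum k hk

theorem monotone_transfer {a b : Fin q → ℝ} (haM : Monotone a) (hbM : Monotone b) {i j : Fin q}
    (hij : i < j) (hle : ∀ m < j, a m ≤ b m) (hge : ∀ m, i < m → m < j → b m ≤ a m) {δ : ℝ}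
    (hδ : 0 ≤ δ) (hi : a i + δ ≤ b i) (hj : b j ≤ a j - δ) :
    Monotone (a + Pi.single i δ - Pi.single j δ) := by
  have hbij := hbM hij.le
  refine monotone_sub_single (monotone_add_single haM hδ fun m him => ?_) hδ fun m hmj => ?_
  · rcases lt_or_ge m j with hmj | hjm
    · linarith [hbM him.le, hge m him hmj]
    · linarith [haM hjm]
  · rcases eq_or_ne m i with rfl | hmi
    · simp [Pi.single_eq_of_ne hij.ne']
      linarith
    · simp [Pi.single_eq_of_ne hmi, Pi.single_eq_of_ne hij.ne']
      linarith [hle m hmj, hbM hmj.le]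

theorem exists_raise_step {F : (Fin q → ℝ) → ℝ}
    (hF : ∀ x : Fin q → ℝ, (∀ m, 0 < x m) → ∀ i δ, 0 ≤ δ → F x ≤ F (x + Pi.single i δ))
    {a b : Fin q → ℝ} (ha0 : ∀ m, 0 < a m) (haM : Monotone a) (hbM : Monotone b)
    (hle : ∀ m, a m ≤ b m) (hab : a ≠ b) :
    ∃ a', F a ≤ F a' ∧ (∀ m, 0 < a' m) ∧ Monotone a' ∧ PrefixSumsLE a' b ∧
      #{m | a' m ≠ b m} < #{m | a m ≠ b m} := by
  obtain ⟨i, hi, himax⟩ := exists_max_image {m | a m ≠ b m} id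
    (by simpa [Finset.Nonempty] using Function.ne_iff.mp hab)
  simp only [mem_filter, mem_univ, true_and, id] at hi himax
  have hδ : 0 ≤ b i - a i := sub_nonneg.2 (hle i)
  set a' : Fin q → ℝ := a + Pi.single i (b i - a i)
  have ha'i : a' i = b i := by simp [a']
  have ha'm : ∀ m, m ≠ i → a' m = a m := fun m hmi => by simp [a', Pi.single_eq_of_ne hmi]
  have ha' : ∀ m, a m ≤ a' m ∧ a' m ≤ b m := fun m => by
    rcases eq_or_ne m i with rfl | hmi
    · exact ⟨ha'i ▸ hle m, ha'i.le⟩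
    · rw [ha'm m hmi]
      exact ⟨le_rfl, hle m⟩
  refine ⟨a', hF a ha0 i _ hδ, fun m => (ha0 m).trans_le (ha' m).1, monotone_add_single haM hδ ?_,
    .of_le fun m => (ha' m).2, card_filter_ne_lt (fun m => ?_) hi ha'i⟩
  · intro m him
    have : a m = b m := not_not.mp fun h => (himax m h).not_gt him
    linarith [hbM him.le]
  · rcases eq_or_ne m i with rfl | hmi
    · exact fun _ => hi
    · rw [ha'm m hmi]
      exact id

theorem exists_transfer_step {F : (Fin q → ℝ) → ℝ}
    (hF : ∀ x : Fin q → ℝ, (∀ m, 0 < x m) → ∀ i j, i ≠ j → ∀ δ, 0 ≤ δ → x i + δ ≤ x j - δ →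
      F x ≤ F (x + Pi.single i δ - Pi.single j δ))
    {a b : Fin q → ℝ} (ha0 : ∀ m, 0 < a m) (haM : Monotone a) (hbM : Monotone b)
    (hsum : PrefixSumsLE a b) {j₀ : Fin q} (hj₀ : b j₀ < a j₀) :
    ∃ a', F a ≤ F a' ∧ (∀ m, 0 < a' m) ∧ Monotone a' ∧ PrefixSumsLE a' b ∧
      #{m | a' m ≠ b m} < #{m | a m ≠ b m} := by
  obtain ⟨j, hj, hjmin⟩ := exists_min_image {m | b m < a m} id ⟨j₀, by simpa using hj₀⟩
  simp only [mem_filter, mem_univ, true_and, id] at hj hjmin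
  have hle : ∀ m < j, a m ≤ b m := fun m hmj => not_lt.mp fun h => (hjmin m h).not_gt hmj
  obtain ⟨i₀, hi₀⟩ := hsum.exists_lt_of_gt hj
  obtain ⟨i, hi, himax⟩ := exists_max_image {m | m < j ∧ a m < b m} id ⟨i₀, by simpa using hi₀⟩
  simp only [mem_filter, mem_univ, true_and, id] at hi himax
  obtain ⟨hij, hi⟩ := hi
  have hge : ∀ m, i < m → m < j → b m ≤ a m := fun m him hmj =>
    not_lt.mp fun h => (himax m ⟨hmj, h⟩).not_gt him
  set δ := min (b i - a i) (a j - b j)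
  have hδ : 0 ≤ δ := le_min (by linarith) (by linarith)
  have hδi : a i + δ ≤ b i := by linarith [min_le_left (b i - a i) (a j - b j)]
  have hδj : b j ≤ a j - δ := by linarith [min_le_right (b i - a i) (a j - b j)]
  have htr : a i + δ ≤ a j - δ := by linarith [hbM hij.le]
  set a' := a + Pi.single i δ - Pi.single j δ
  have ha'i : a' i = a i + δ := by simp [a', Pi.single_eq_of_ne hij.ne]
  have ha'j : a' j = a j - δ := by simp [a', Pi.single_eq_of_ne hij.ne']
  have ha'm : ∀ m, m ≠ i → m ≠ j → a' m = a m := fun m hmi hmj => by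
    simp [a', Pi.single_eq_of_ne hmi, Pi.single_eq_of_ne hmj]
  refine ⟨a', hF a ha0 i j hij.ne δ hδ htr, fun m => ?_,
    monotone_transfer haM hbM hij hle hge hδ hδi hδj, hsum.transfer hij hle hδi, ?_⟩
  · rcases eq_or_ne m i with rfl | hmi
    · linarith [ha0 m]
    rcases eq_or_ne m j with rfl | hmj
    · linarith [ha0 i]
    · exact ha'm m hmi hmj ▸ ha0 m
  have hne : ∀ m, a' m ≠ b m → a m ≠ b m := fun m => by
    rcases eq_or_ne m i with rfl | hmi
    · exact fun _ => hi.ne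
    rcases eq_or_ne m j with rfl | hmj
    · exact fun _ => hj.ne'
    · rw [ha'm m hmi hmj]
      exact id
  -- `δ` is chosen so that the transfer settles one of the two coordinates
  obtain hδ' | hδ' : δ = b i - a i ∨ δ = a j - b j := min_choice _ _
  · exact card_filter_ne_lt hne hi.ne (by rw [ha'i, hδ']; ring)
  · exact card_filter_ne_lt hne hj.ne' (by rw [ha'j, hδ']; ring)

theorem le_of_prefixSumsLE {F : (Fin q → ℝ) → ℝ}
    (hF_add : ∀ x : Fin q → ℝ, (∀ m, 0 < x m) → ∀ i δ, 0 ≤ δ → F x ≤ F (x + Pi.single i δ))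
    (hF_transfer : ∀ x : Fin q → ℝ, (∀ m, 0 < x m) → ∀ i j, i ≠ j → ∀ δ, 0 ≤ δ →
      x i + δ ≤ x j - δ → F x ≤ F (x + Pi.single i δ - Pi.single j δ))
    {a b : Fin q → ℝ} (ha0 : ∀ m, 0 < a m) (haM : Monotone a) (hbM : Monotone b)
    (hsum : PrefixSumsLE a b) : F a ≤ F b := by
  induction hn : #{m | a m ≠ b m} using Nat.strong_induction_on generalizing a with
  | _ n ih =>
  by_cases hab : a = b
  · rw [hab]
  obtain ⟨a', hFa', ha'0, ha'M, ha'sum, hcard⟩ :=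
    if hle : ∀ m, a m ≤ b m then exists_raise_step hF_add ha0 haM hbM hle hab
    else
      have ⟨j, hj⟩ := not_forall.mp hle
      exists_transfer_step hF_transfer ha0 haM hbM hsum (not_le.mp hj)
  exact hFa'.trans (ih _ (hn ▸ hcard) ha'0 ha'M ha'sum rfl)

end Majorization

theorem stmt2_general (q : ℕ) (a b : Fin q → ℝ)
    (ha0 : ∀ i, 0 < a i)
    (haM : Monotone a) (hbM : Monotone b)
    (hsum : ∀ k : ℕ, k ≤ q →
      ∑ i ∈ Finset.univ.filter (fun i : Fin q => (i : ℕ) < k), a i ≤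
      ∑ i ∈ Finset.univ.filter (fun i : Fin q => (i : ℕ) < k), b i) :
    ∀ k : ℕ, 1 ≤ k → k ≤ q →
      esymm q k a / esymm q (k - 1) a ≤ esymm q k b / esymm q (k - 1) b := by
  rintro k hk hkq
  obtain ⟨k, rfl⟩ := Nat.exists_eq_add_of_le' hk
  rw [Nat.add_sub_cancel]
  exact le_of_prefixSumsLE (F := fun x => esymm q (k + 1) x / esymm q k x)
    (fun x hx i δ hδ => esymm_succ_div_esymm_le_add_single (by omega) hx i hδ)
    (fun x hx i j hij δ hδ h => esymm_succ_div_esymm_le_transfer (by omega) hx hij hδ h)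
    ha0 haM hbM hsum

/-- If `B` is weakly supermajorized by `A` (both sorted increasingly, entries
positive, partial sums of `A` bounded by those of `B`), then
`e_k(B)/e_{k-1}(B) ≥ e_k(A)/e_{k-1}(A)` for `k = 1, …, q`. -/
theorem stmt2 (q : ℕ) (a b : Fin q → ℝ)
    (ha0 : ∀ i, 0 < a i) (hb0 : ∀ i, 0 < b i)
    (haM : Monotone a) (hbM : Monotone b)
    (hsum : ∀ k : ℕ, k ≤ q →
      ∑ i ∈ Finset.univ.filter (fun i : Fin q => (i : ℕ) < k), a i ≤
      ∑ i ∈ Finset.univ.filter (fun i : Fin q => (i : ℕ) < k), b i) :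
    ∀ k : ℕ, 1 ≤ k → k ≤ q →
      esymm q k a / esymm q (k - 1) a ≤ esymm q k b / esymm q (k - 1) b :=
  stmt2_general q a b ha0 haM hbM hsum
end

section
/- Suppose $a_1, a_2, b_1, b_2, \sigma > 0$ with $b_1 + b_2 = a_1 + a_2$. Then for $z$ with $|z| < 1$: ${}_3F_2(\sigma, a_1, a_2; b_1, b_2; -z) = \frac{\Gamma(b_1)\Gamma(b_2)}{\Gamma(a_1)\Gamma(a_2)}\left\{\frac{1}{(1+z)^\sigma} + \int_0^1 \frac{(b_1-a_1)(b_2-a_1)\, t^{a_2-1}}{(1+zt)^\sigma}\, {}_2F_1(b_1-a_1+1, b_2-a_1+1; 2; 1-t)\, dt\right\}$. -/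
open Complex Real

/-- Pochhammer symbol `(a)_n` for real `a`. -/
noncomputable def poch (a : ℝ) (n : ℕ) : ℝ := Polynomial.eval a (ascPochhammer ℝ n)

/-- Gauss hypergeometric series `₂F₁(p,q;r;x)` for real parameters/argument. -/
noncomputable def Gauss2F1 (p q r x : ℝ) : ℝ :=
  ∑' n : ℕ, poch p n * poch q n / (poch r n * n.factorial) * x ^ n

open Filter Topology MeasureTheory Set
open scoped Nat

/-!
Write `α = b₁ - a₁`, `β = b₂ - a₁`. Expanding `(1 + z t) ^ (-σ) = ∑ (σ)ₙ / n! (-z t) ^ n` and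
`₂F₁(α + 1, β + 1; 2; 1 - t)` in powers of `1 - t`, the integral becomes a double series of Beta
integrals `∫₀¹ t ^ (a₂ + n - 1) (1 - t) ^ k dt = k! / (a₂ + n)ₖ₊₁`. For fixed `n` the sum over `k`
is the series of `₂F₁(α, β; a₂ + n; 1)` without its constant term. Since `α + β = a₂ - a₁`, Gauss's
theorem gives `₂F₁(α, β; a₂ + n; 1) = Γ(a₂ + n) Γ(a₁ + n) / (Γ(b₂ + n) Γ(b₁ + n))`, and adding back
the atom `(1 + z) ^ (-σ) = ∑ (σ)ₙ / n! (-z) ^ n` produces exactly the `₃F₂` coefficients.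

Gauss's theorem: `F(c) = ₂F₁(a, b; c; 1)` satisfies the contiguous relation
`c (c - a - b) F(c) = (c - a) (c - b) F(c + 1)` (a telescoping sum), so
`F(c + m) (c - a)ₘ (c - b)ₘ / ((c)ₘ (c - a - b)ₘ)` does not depend on `m`. As `m → ∞`,
`F(c + m) → 1`, and Euler's limit formula for `Γ` evaluates the limit of the Pochhammer quotient;
the same formula gives the growth `(u)ₖ (v)ₖ / ((r)ₖ (s)ₖ) = O(k ^ (u + v - r - s))` behind all
convergence statements.
-/

lemma poch_zero (a : ℝ) : poch a 0 = 1 := by simp [poch]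

lemma poch_succ (a : ℝ) (n : ℕ) : poch a (n + 1) = poch a n * (a + n) := by
  simp [poch, ascPochhammer_succ_eval]

lemma poch_succ_left (a : ℝ) (n : ℕ) : poch a (n + 1) = a * poch (a + 1) n := by
  simp [poch, ascPochhammer_succ_left, Polynomial.eval_comp]

lemma poch_add (a : ℝ) (m n : ℕ) : poch a (m + n) = poch a m * poch (a + m) n := by
  simpa [poch, Polynomial.eval_comp] using
    congrArg (Polynomial.eval a) (ascPochhammer_mul ℝ m n).symm

lemma poch_eq_prod_range (a : ℝ) (n : ℕ) : poch a n = ∏ j ∈ Finset.range n, (a + j) := by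
  induction n with
  | zero => simp [poch_zero]
  | succ n ih => rw [poch_succ, ih, Finset.prod_range_succ]

lemma poch_pos {a : ℝ} (ha : 0 < a) (n : ℕ) : 0 < poch a n := ascPochhammer_pos n a ha

lemma poch_nonneg {a : ℝ} (ha : 0 ≤ a) (n : ℕ) : 0 ≤ poch a n := by
  rw [poch_eq_prod_range]
  exact Finset.prod_nonneg fun j _ => by positivity

lemma poch_le_poch {a b : ℝ} (ha : 0 ≤ a) (hab : a ≤ b) (n : ℕ) : poch a n ≤ poch b n := by
  rw [poch_eq_prod_range, poch_eq_prod_range]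
  exact Finset.prod_le_prod (fun j _ => by positivity) fun j _ => by linarith

lemma abs_poch_le (a : ℝ) (n : ℕ) : |poch a n| ≤ poch |a| n := by
  rw [poch_eq_prod_range, poch_eq_prod_range, Finset.abs_prod]
  exact Finset.prod_le_prod (fun j _ => abs_nonneg _) fun j _ =>
    (abs_add_le _ _).trans_eq (by simp)

lemma poch_one (n : ℕ) : poch 1 n = n ! := ascPochhammer_eval_one ℝ n

lemma poch_two (n : ℕ) : poch 2 n = (n + 1)! := by
  have h := poch_succ_left 1 n
  rw [poch_one, one_add_one_eq_two, one_mul] at h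
  exact h.symm

lemma Gamma_add_natCast {a : ℝ} (ha : 0 < a) (n : ℕ) :
    Real.Gamma (a + n) = Real.Gamma a * poch a n := by
  induction n with
  | zero => simp [poch_zero]
  | succ n ih =>
    rw [Nat.cast_succ, ← add_assoc, Real.Gamma_add_one (by positivity : 0 < a + n).ne', ih,
      poch_succ]
    ring

lemma le_poch_succ {x : ℝ} (hx : 0 ≤ x) (k : ℕ) : x ≤ poch x (k + 1) := by
  rw [poch_succ_left]
  refine le_mul_of_one_le_right hx ?_
  calc (1 : ℝ) ≤ k ! := by exact_mod_cast k.factorial_pos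
    _ = poch 1 k := (poch_one k).symm
    _ ≤ poch (x + 1) k := poch_le_poch zero_le_one (by linarith) k

lemma GammaSeq_eq_div_poch (p : ℝ) (k : ℕ) :
    Real.GammaSeq p k = (k : ℝ) ^ p * k ! / poch p (k + 1) := by
  rw [Real.GammaSeq, poch_eq_prod_range]

theorem tendsto_poch_ratio_mul_rpow {p q r s : ℝ} (hp : 0 < p) (hq : 0 < q) (hr : 0 < r)
    (hs : 0 < s) :
    Tendsto (fun k : ℕ => poch p (k + 1) * poch q (k + 1) / (poch r (k + 1) * poch s (k + 1)) *
      (k : ℝ) ^ (r + s - p - q)) atTop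
      (𝓝 (Real.Gamma r * Real.Gamma s / (Real.Gamma p * Real.Gamma q))) := by
  have hlim := ((Real.GammaSeq_tendsto_Gamma r).mul (Real.GammaSeq_tendsto_Gamma s)).div
    ((Real.GammaSeq_tendsto_Gamma p).mul (Real.GammaSeq_tendsto_Gamma q))
    (mul_pos (Real.Gamma_pos_of_pos hp) (Real.Gamma_pos_of_pos hq)).ne'
  refine hlim.congr' ?_
  filter_upwards [eventually_gt_atTop 0] with k hk
  have hk : (0 : ℝ) < k := Nat.cast_pos.mpr hk
  simp only [GammaSeq_eq_div_poch, Pi.div_apply]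
  rw [Real.rpow_sub hk, Real.rpow_sub hk, Real.rpow_add hk]
  have := poch_pos hp (k + 1); have := poch_pos hq (k + 1)
  have := poch_pos hr (k + 1); have := poch_pos hs (k + 1)
  have := Real.rpow_pos_of_pos hk p; have := Real.rpow_pos_of_pos hk q
  have : (0 : ℝ) < k ! := by positivity
  field_simp

lemma isBigO_poch_ratio {p q r s : ℝ} (hp : 0 < p) (hq : 0 < q) (hr : 0 < r) (hs : 0 < s) :
    (fun k : ℕ => poch p (k + 1) * poch q (k + 1) / (poch r (k + 1) * poch s (k + 1)))
      =O[atTop] fun k : ℕ => (k : ℝ) ^ (p + q - r - s) := by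
  have hO := ((tendsto_poch_ratio_mul_rpow hp hq hr hs).isBigO_one ℝ).mul
    (Asymptotics.isBigO_refl (fun k : ℕ => (k : ℝ) ^ (p + q - r - s)) atTop)
  refine hO.congr' ?_ (Eventually.of_forall fun k => one_mul _)
  filter_upwards [eventually_gt_atTop 0] with k hk
  rw [mul_assoc, ← Real.rpow_add (Nat.cast_pos.mpr hk),
    show r + s - p - q + (p + q - r - s) = 0 by ring, Real.rpow_zero, mul_one]

/-- Shifting past the negative parameters reduces to `isBigO_poch_ratio`. -/
lemma exists_isBigO_abs_poch_ratio (u v : ℝ) {r s : ℝ} (hr : 0 < r) (hs : 0 < s) :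
    ∃ K : ℕ, (fun k : ℕ => |poch u (k + K) * poch v (k + K)| / (poch r (k + K) * poch s (k + K)))
      =O[atTop] fun k : ℕ => (k : ℝ) ^ (u + v - r - s) := by
  obtain ⟨N, hN⟩ := exists_nat_gt (max (-u) (-v))
  have hu : 0 < u + N := by linarith [le_max_left (-u) (-v)]
  have hv : 0 < v + N := by linarith [le_max_right (-u) (-v)]
  refine ⟨N + 1, ?_⟩
  have hO := (isBigO_poch_ratio hu hv (by positivity : 0 < r + N)
    (by positivity : 0 < s + N)).const_mul_left
    (|poch u N * poch v N| / (poch r N * poch s N))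
  refine hO.congr (fun k => ?_) (fun k => by ring_nf)
  rw [← add_assoc, add_comm k N, add_assoc, poch_add u, poch_add v, poch_add r, poch_add s,
    mul_mul_mul_comm, abs_mul (poch u N * poch v N),
    abs_of_pos (mul_pos (poch_pos hu _) (poch_pos hv _))]
  ring

lemma summable_abs_poch_ratio (u v : ℝ) {r s : ℝ} (hr : 0 < r) (hs : 0 < s)
    (h : u + v + 1 < r + s) :
    Summable fun k : ℕ => |poch u k * poch v k| / (poch r k * poch s k) := by
  obtain ⟨K, hK⟩ := exists_isBigO_abs_poch_ratio u v hr hs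
  rw [← summable_nat_add_iff K]
  exact summable_of_isBigO_nat (Real.summable_nat_rpow.mpr (by linarith)) hK

lemma tendsto_abs_poch_ratio_zero (u v : ℝ) {r s : ℝ} (hr : 0 < r) (hs : 0 < s)
    (h : u + v < r + s) :
    Tendsto (fun k : ℕ => |poch u k * poch v k| / (poch r k * poch s k)) atTop (𝓝 0) := by
  obtain ⟨K, hK⟩ := exists_isBigO_abs_poch_ratio u v hr hs
  rw [← tendsto_add_atTop_iff_nat K]
  refine hK.trans_tendsto ?_
  have := (tendsto_rpow_neg_atTop (by linarith : 0 < r + s - u - v)).comp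
    tendsto_natCast_atTop_atTop
  simpa [Function.comp_def, show -(r + s - u - v) = u + v - r - s by ring] using this

lemma tsum_sub_succ_of_tendsto_zero {w : ℕ → ℝ} (hw : Tendsto w atTop (𝓝 0))
    (hs : Summable fun k => w k - w (k + 1)) : ∑' k, (w k - w (k + 1)) = w 0 := by
  refine tendsto_nhds_unique hs.hasSum.tendsto_sum_nat ?_
  simp_rw [Finset.sum_range_sub']
  simpa using tendsto_const_nhds.sub hw

lemma mem_eball_zero_one {𝕜 : Type*} [NormedField 𝕜] {w : 𝕜} (hw : ‖w‖ < 1) :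
    w ∈ Metric.eball (0 : 𝕜) 1 := by
  rw [Metric.mem_eball, edist_zero_right, ← ofReal_norm, ENNReal.ofReal_lt_one]
  exact hw

noncomputable def Gauss2F1Coeff (a b c : ℝ) (k : ℕ) : ℝ := poch a k * poch b k / (poch c k * k !)

lemma Gauss2F1_eq_tsum (a b c x : ℝ) : Gauss2F1 a b c x = ∑' k, Gauss2F1Coeff a b c k * x ^ k := rfl

lemma Gauss2F1_one_eq_tsum (a b c : ℝ) : Gauss2F1 a b c 1 = ∑' k, Gauss2F1Coeff a b c k := by
  simp [Gauss2F1_eq_tsum]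

lemma abs_Gauss2F1Coeff {c : ℝ} (hc : 0 < c) (a b : ℝ) (k : ℕ) :
    |Gauss2F1Coeff a b c k| = |poch a k * poch b k| / (poch c k * poch 1 k) := by
  have := poch_pos hc k
  rw [Gauss2F1Coeff, abs_div, poch_one, abs_of_pos (by positivity : 0 < poch c k * k !)]

lemma summable_abs_Gauss2F1Coeff {a b c : ℝ} (hc : 0 < c) (h : a + b < c) :
    Summable fun k => |Gauss2F1Coeff a b c k| := by
  simpa only [abs_Gauss2F1Coeff hc] using summable_abs_poch_ratio a b hc one_pos (by linarith)

lemma summable_Gauss2F1Coeff {a b c : ℝ} (hc : 0 < c) (h : a + b < c) :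
    Summable (Gauss2F1Coeff a b c) :=
  (summable_abs_Gauss2F1Coeff hc h).of_abs

lemma Gauss2F1Coeff_nonneg {a b c : ℝ} (ha : 0 ≤ a) (hb : 0 ≤ b) (hc : 0 ≤ c) (k : ℕ) :
    0 ≤ Gauss2F1Coeff a b c k := by
  have := poch_nonneg ha k; have := poch_nonneg hb k; have := poch_nonneg hc k
  rw [Gauss2F1Coeff]
  positivity

lemma abs_Gauss2F1Coeff_le (u v : ℝ) {c : ℝ} (hc : 0 < c) (k : ℕ) :
    |Gauss2F1Coeff u v c k| ≤ Gauss2F1Coeff (|u| + 1) (|v| + 1) c k := by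
  have := poch_pos hc k
  rw [abs_Gauss2F1Coeff hc, poch_one, Gauss2F1Coeff, abs_mul]
  gcongr
  · exact poch_nonneg (by positivity) k
  · exact (abs_poch_le u k).trans (poch_le_poch (abs_nonneg u) (by linarith) k)
  · exact (abs_poch_le v k).trans (poch_le_poch (abs_nonneg v) (by linarith) k)

lemma summable_abs_Gauss2F1Coeff_mul_pow (u v : ℝ) {c : ℝ} (hc : 0 < c) {x : ℝ} (hx₀ : 0 ≤ x)
    (hx : x < 1) : Summable fun k => |Gauss2F1Coeff u v c k| * x ^ k := by
  -- compare with parameters that are not non-positive integers, so that the radius is `1`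
  set a := |u| + 1
  set b := |v| + 1
  have ha : 0 < a := by positivity
  have hb : 0 < b := by positivity
  have hradius : (ordinaryHypergeometricSeries ℝ a b c).radius = 1 :=
    ordinaryHypergeometricSeries_radius_eq_one ℝ a b c fun k => by
      have : (0 : ℝ) ≤ k := k.cast_nonneg
      exact ⟨by linarith, by linarith, by linarith⟩
  have hmem : x ∈ Metric.eball (0 : ℝ) (ordinaryHypergeometricSeries ℝ a b c).radius :=
    hradius ▸ mem_eball_zero_one (by rwa [Real.norm_of_nonneg hx₀])
  refine ((ordinaryHypergeometricSeries ℝ a b c).summable_norm_apply hmem).of_nonneg_of_le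
    (fun k => by positivity) fun k => ?_
  rw [ordinaryHypergeometricSeries_apply_eq, smul_eq_mul, norm_mul, norm_pow,
    Real.norm_of_nonneg hx₀]
  have hterm : (k ! : ℝ)⁻¹ * poch a k * poch b k * (poch c k)⁻¹ = Gauss2F1Coeff a b c k := by
    rw [Gauss2F1Coeff]; ring
  rw [poch, poch, poch] at hterm
  rw [hterm, Real.norm_of_nonneg (Gauss2F1Coeff_nonneg ha.le hb.le hc.le k)]
  gcongr
  exact abs_Gauss2F1Coeff_le u v hc k

noncomputable def contiguityWeight (a b c : ℝ) (k : ℕ) : ℝ :=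
  k * (c + k) * Gauss2F1Coeff a b (c + 1) k

lemma contiguityWeight_sub_succ {a b c : ℝ} (hc : 0 < c) (k : ℕ) :
    c * (c - a - b) * Gauss2F1Coeff a b c k - (c - a) * (c - b) * Gauss2F1Coeff a b (c + 1) k =
      contiguityWeight a b c k - contiguityWeight a b c (k + 1) := by
  have hck : (0 : ℝ) < c + k := by positivity
  have hpoch : poch c k * (c + k) = c * poch (c + 1) k := by rw [← poch_succ, poch_succ_left]
  have := poch_pos (by linarith : 0 < c + 1) k
  have : (0 : ℝ) < k ! := by positivity
  simp only [contiguityWeight, Gauss2F1Coeff, poch_succ, Nat.factorial_succ]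
  rw [eq_div_of_mul_eq hck.ne' hpoch]
  push_cast
  field_simp
  ring

lemma contiguityWeight_succ (a b : ℝ) {c : ℝ} (hc : 0 < c) (k : ℕ) :
    contiguityWeight a b c (k + 1) =
      a * b * (poch (a + 1) k * poch (b + 1) k / (poch (c + 1) k * poch 1 k)) := by
  have := poch_pos (by linarith : 0 < c + 1) k
  have : 0 < c + 1 + k := by positivity
  rw [contiguityWeight, Gauss2F1Coeff, poch_succ_left a, poch_succ_left b, poch_succ (c + 1),
    poch_one, Nat.factorial_succ]
  push_cast
  field_simp
  ring

lemma tendsto_contiguityWeight_zero {a b c : ℝ} (hc : 0 < c) (h : a + b < c) :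
    Tendsto (contiguityWeight a b c) atTop (𝓝 0) := by
  rw [← tendsto_add_atTop_iff_nat 1]
  have hlim := (tendsto_abs_poch_ratio_zero (a + 1) (b + 1) (by linarith : 0 < c + 1) one_pos
    (by linarith)).const_mul |a * b|
  rw [mul_zero] at hlim
  refine squeeze_zero_norm (fun k => le_of_eq ?_) hlim
  have := poch_pos (by linarith : 0 < c + 1) k
  have := poch_pos one_pos k
  rw [contiguityWeight_succ a b hc, Real.norm_eq_abs, abs_mul, abs_div,
    abs_of_pos (by positivity : 0 < poch (c + 1) k * poch 1 k)]

theorem contiguous_Gauss2F1_one {a b c : ℝ} (hc : 0 < c) (h : a + b < c) :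
    c * (c - a - b) * Gauss2F1 a b c 1 = (c - a) * (c - b) * Gauss2F1 a b (c + 1) 1 := by
  have hs := (summable_Gauss2F1Coeff hc h).mul_left (c * (c - a - b))
  have hs₁ := (summable_Gauss2F1Coeff (by linarith : 0 < c + 1)
    (by linarith : a + b < c + 1)).mul_left ((c - a) * (c - b))
  have htel := tsum_sub_succ_of_tendsto_zero (tendsto_contiguityWeight_zero hc h)
    ((hs.sub hs₁).congr (contiguityWeight_sub_succ hc))
  rw [← tsum_congr (contiguityWeight_sub_succ hc), hs.tsum_sub hs₁, tsum_mul_left,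
    tsum_mul_left] at htel
  rw [Gauss2F1_one_eq_tsum, Gauss2F1_one_eq_tsum, ← sub_eq_zero, htel]
  simp [contiguityWeight]

lemma tendsto_Gauss2F1_one_atTop {a b c : ℝ} (hc : 0 < c) (h : a + b < c) :
    Tendsto (fun m : ℕ => Gauss2F1 a b (c + m) 1) atTop (𝓝 1) := by
  simp only [Gauss2F1_one_eq_tsum]
  have hbound := summable_abs_Gauss2F1Coeff (by linarith : 0 < c + 1) (by linarith : a + b < c + 1)
  convert tendsto_tsum_of_dominated_convergence hbound
    (f := fun (m : ℕ) k => Gauss2F1Coeff a b (c + m) k) (g := fun k => if k = 0 then 1 else 0)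
    (fun k => ?_) ?_
  · simp
  · rcases k with _ | k
    · simp [Gauss2F1Coeff, poch_zero]
    · have hpoch : Tendsto (fun m : ℕ => poch (c + m) (k + 1)) atTop atTop :=
        tendsto_atTop_mono (fun m => le_poch_succ (by positivity) k)
          (tendsto_atTop_add_const_left _ c tendsto_natCast_atTop_atTop)
      simpa [Gauss2F1Coeff, div_eq_mul_inv, mul_comm, mul_left_comm, mul_assoc] using
        hpoch.inv_tendsto_atTop.const_mul (poch a (k + 1) * poch b (k + 1) / (k + 1)!)
  · filter_upwards [eventually_ge_atTop 1] with m hm k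
    have hm : (1 : ℝ) ≤ m := by exact_mod_cast hm
    rw [Real.norm_eq_abs, abs_Gauss2F1Coeff (by positivity), abs_Gauss2F1Coeff (by linarith)]
    gcongr
    · exact mul_pos (poch_pos (by linarith) k) (poch_pos one_pos k)
    · exact (poch_pos one_pos k).le
    · exact poch_le_poch (by linarith) (by linarith) k

theorem Gauss2F1_one {a b c : ℝ} (hc : 0 < c) (hca : 0 < c - a) (hcb : 0 < c - b)
    (hcab : 0 < c - a - b) :
    Gauss2F1 a b c 1 =
      Real.Gamma c * Real.Gamma (c - a - b) / (Real.Gamma (c - a) * Real.Gamma (c - b)) := by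
  set P : ℕ → ℝ := fun m => Gauss2F1 a b (c + m) 1 *
    (poch (c - a) m * poch (c - b) m / (poch c m * poch (c - a - b) m)) with hP
  have hstep (m : ℕ) : P (m + 1) = P m := by
    have hcont := contiguous_Gauss2F1_one (by positivity : 0 < c + m) (by linarith : a + b < c + m)
    have := poch_pos hc m
    have := poch_pos hcab m
    have : 0 < c - a - b + m := by positivity
    have : 0 < c + m - a := by linarith
    have : 0 < c + m - b := by linarith
    simp only [hP, poch_succ, Nat.cast_succ, ← add_assoc]
    field_simp
    linear_combination (-(poch (c - a) m * poch (c - b) m)) * hcont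
  have hlim : Tendsto (fun m : ℕ => P (m + 1)) atTop (𝓝 (1 *
      (Real.Gamma c * Real.Gamma (c - a - b) / (Real.Gamma (c - a) * Real.Gamma (c - b))))) := by
    refine ((tendsto_add_atTop_iff_nat 1).mpr (tendsto_Gauss2F1_one_atTop hc (by linarith))).mul ?_
    have hratio := tendsto_poch_ratio_mul_rpow hca hcb hc hcab
    rw [show c + (c - a - b) - (c - a) - (c - b) = 0 by ring] at hratio
    simpa using hratio
  have hconst (m : ℕ) : P m = Gauss2F1 a b c 1 := by
    induction m with
    | zero => simp [hP, poch_zero]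
    | succ m ih => rw [hstep, ih]
  rw [← one_mul (_ / _)]
  exact tendsto_nhds_unique (tendsto_const_nhds.congr fun m => (hconst (m + 1)).symm) hlim

lemma ofReal_poch (a : ℝ) (n : ℕ) : ((poch a n : ℝ) : ℂ) = (ascPochhammer ℂ n).eval (a : ℂ) := by
  rw [poch, ascPochhammer_eval₂ Complex.ofRealHom]
  exact (Polynomial.eval₂_hom Complex.ofRealHom a).symm

lemma Ring.choose_neg_ofReal (σ : ℝ) (n : ℕ) :
    Ring.choose (-(σ : ℂ)) n = ((poch σ n / n ! : ℝ) : ℂ) * (-1) ^ n := by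
  have h := Ring.factorial_nsmul_multichoose_eq_ascPochhammer (σ : ℂ) n
  rw [Polynomial.ascPochhammer_smeval_eq_eval, nsmul_eq_mul, ← ofReal_poch] at h
  have : (n ! : ℂ) ≠ 0 := Nat.cast_ne_zero.mpr n.factorial_ne_zero
  rw [Ring.choose_neg', Units.smul_def, Int.coe_negOnePow_natCast, zsmul_eq_mul,
    Complex.ofReal_div, ← h]
  push_cast
  field_simp

lemma binomialSeries_neg_ofReal_apply (σ : ℝ) (w : ℂ) (n : ℕ) :
    binomialSeries ℂ (-(σ : ℂ)) n (fun _ => w) = ((poch σ n / n ! : ℝ) : ℂ) * (-w) ^ n := by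
  rw [binomialSeries_apply, List.ofFn_const, List.prod_replicate, smul_eq_mul,
    Ring.choose_neg_ofReal, neg_pow w, mul_assoc]

theorem hasSum_one_add_cpow_neg (σ : ℝ) {w : ℂ} (hw : ‖w‖ < 1) :
    HasSum (fun n : ℕ => ((poch σ n / n ! : ℝ) : ℂ) * (-w) ^ n) ((1 + w) ^ (-(σ : ℂ))) := by
  have h := (Complex.one_add_cpow_hasFPowerSeriesOnBall_zero (a := -(σ : ℂ))).hasSum
    (mem_eball_zero_one hw)
  simpa only [binomialSeries_neg_ofReal_apply, zero_add] using h

lemma summable_norm_binomial (σ : ℝ) {w : ℂ} (hw : ‖w‖ < 1) :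
    Summable fun n : ℕ => ‖((poch σ n / n ! : ℝ) : ℂ) * (-w) ^ n‖ := by
  have hp := Complex.one_add_cpow_hasFPowerSeriesOnBall_zero (a := -(σ : ℂ))
  simpa only [binomialSeries_neg_ofReal_apply] using
    (binomialSeries ℂ (-(σ : ℂ))).summable_norm_apply
      (Metric.eball_subset_eball hp.r_le (mem_eball_zero_one hw))

lemma integral_rpow_mul_one_sub_pow {p : ℝ} (hp : 0 < p) (k : ℕ) :
    ∫ t in (0 : ℝ)..1, t ^ (p - 1) * (1 - t) ^ k = k ! / poch p (k + 1) := by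
  apply Complex.ofReal_injective
  have hB := Complex.betaIntegral_eval_nat_add_one_right (u := p) (by simpa using hp) k
  rw [Complex.betaIntegral] at hB
  rw [← intervalIntegral.integral_ofReal]
  convert hB using 1
  · refine intervalIntegral.integral_congr fun t ht => ?_
    have ht : 0 ≤ t := by rw [Set.uIcc_of_le zero_le_one] at ht; exact ht.1
    rw [show ((k : ℂ) + 1 - 1) = (k : ℕ) by ring, Complex.cpow_natCast]
    push_cast
    rw [Complex.ofReal_cpow ht]
    push_cast
    ring_nf
  · rw [poch_eq_prod_range]
    push_cast
    rfl

section BetaExpansion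

variable {A : ℕ → ℂ} {D : ℕ → ℝ} {c : ℝ}

noncomputable def betaExpansionTerm (A : ℕ → ℂ) (D : ℕ → ℝ) (c : ℝ) (p : ℕ × ℕ) (t : ℝ) : ℂ :=
  A p.1 * D p.2 * ((t ^ (c + p.1 - 1) * (1 - t) ^ p.2 : ℝ) : ℂ)

lemma tsum_betaExpansionTerm (hA : Summable fun n => ‖A n‖) {t : ℝ}
    (hD : Summable fun k => |D k| * (1 - t) ^ k) (ht : t ∈ Ioc (0 : ℝ) 1) :
    (∑' n, A n * (t : ℂ) ^ n) * ((t ^ (c - 1) * ∑' k, D k * (1 - t) ^ k : ℝ) : ℂ) =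
      ∑' p, betaExpansionTerm A D c p t := by
  have h1t : 0 ≤ 1 - t := sub_nonneg.2 ht.2
  have hf : Summable fun n => ‖A n * (t : ℂ) ^ n‖ := by
    refine hA.of_nonneg_of_le (fun n => norm_nonneg _) fun n => ?_
    rw [norm_mul, norm_pow, Complex.norm_real, Real.norm_of_nonneg ht.1.le]
    exact mul_le_of_le_one_right (norm_nonneg _) (pow_le_one₀ ht.1.le ht.2)
  have hg : Summable fun k => ‖((D k * (1 - t) ^ k : ℝ) : ℂ)‖ := by
    refine hD.congr fun k => ?_
    rw [Complex.norm_real, Real.norm_eq_abs, abs_mul, abs_of_nonneg (pow_nonneg h1t k)]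
  rw [Complex.ofReal_mul, Complex.ofReal_tsum, mul_left_comm,
    tsum_mul_tsum_of_summable_norm hf hg, ← tsum_mul_left]
  refine tsum_congr fun p => ?_
  rw [betaExpansionTerm, show c + p.1 - 1 = (c - 1) + p.1 by ring, Real.rpow_add ht.1,
    Real.rpow_natCast]
  push_cast
  ring

lemma intervalIntegrable_rpow_mul_one_sub_pow {p : ℝ} (hp : 0 < p) (k : ℕ) :
    IntervalIntegrable (fun t : ℝ => t ^ (p - 1) * (1 - t) ^ k) volume 0 1 :=
  (intervalIntegral.intervalIntegrable_rpow' (by linarith)).mul_continuousOn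
    ((continuous_const.sub continuous_id).pow k).continuousOn

lemma integrableOn_betaExpansionTerm (hc : 0 < c) (p : ℕ × ℕ) :
    IntegrableOn (betaExpansionTerm A D c p) (Ioc 0 1) := by
  have := (intervalIntegrable_rpow_mul_one_sub_pow (by positivity : 0 < c + p.1) p.2).1
  exact this.ofReal.const_mul _

lemma integral_betaExpansionTerm (hc : 0 < c) (p : ℕ × ℕ) :
    ∫ t in Ioc (0 : ℝ) 1, betaExpansionTerm A D c p t =
      A p.1 * ((D p.2 * (p.2 ! / poch (c + p.1) (p.2 + 1)) : ℝ) : ℂ) := by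
  simp only [betaExpansionTerm]
  rw [integral_const_mul, integral_complex_ofReal, ← intervalIntegral.integral_of_le zero_le_one,
    integral_rpow_mul_one_sub_pow (by positivity) p.2]
  push_cast
  ring

lemma integral_norm_betaExpansionTerm (hc : 0 < c) (p : ℕ × ℕ) :
    ∫ t in Ioc (0 : ℝ) 1, ‖betaExpansionTerm A D c p t‖ =
      ‖A p.1‖ * (|D p.2| * (p.2 ! / poch (c + p.1) (p.2 + 1))) := by
  have hEq : EqOn (fun t => ‖betaExpansionTerm A D c p t‖)
      (fun t => ‖A p.1‖ * |D p.2| * (t ^ (c + p.1 - 1) * (1 - t) ^ p.2)) (Ioc 0 1) := by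
    intro t ht
    simp only [betaExpansionTerm, norm_mul, Complex.norm_real, Real.norm_eq_abs]
    rw [abs_of_pos (Real.rpow_pos_of_pos ht.1 _), abs_of_nonneg (pow_nonneg (sub_nonneg.2 ht.2) _)]
  rw [setIntegral_congr_fun measurableSet_Ioc hEq, integral_const_mul,
    ← intervalIntegral.integral_of_le zero_le_one,
    integral_rpow_mul_one_sub_pow (by positivity) p.2]
  ring

/-- Fubini–Tonelli for the double series; each term integrates to a Beta integral. -/
theorem hasSum_integral_mul_tsum_mul_tsum (hc : 0 < c) (hA : Summable fun n => ‖A n‖)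
    (hD : ∀ x, 0 ≤ x → x < 1 → Summable fun k => |D k| * x ^ k)
    (hDc : Summable fun k => |D k| * (k ! / poch c (k + 1))) :
    HasSum (fun n => A n * ((∑' k, D k * (k ! / poch (c + n) (k + 1)) : ℝ) : ℂ))
      (∫ t in (0 : ℝ)..1,
        (∑' n, A n * (t : ℂ) ^ n) * ((t ^ (c - 1) * ∑' k, D k * (1 - t) ^ k : ℝ) : ℂ)) := by
  have hmom (n k : ℕ) : |D k| * (k ! / poch (c + n) (k + 1)) ≤ |D k| * (k ! / poch c (k + 1)) := by
    gcongr
    · exact poch_pos hc _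
    · exact poch_le_poch hc.le (by linarith [(n.cast_nonneg : (0 : ℝ) ≤ n)]) _
  have hnorm : Summable fun p : ℕ × ℕ => ∫ t in Ioc (0 : ℝ) 1, ‖betaExpansionTerm A D c p t‖ := by
    refine (hA.mul_of_nonneg hDc (fun n => norm_nonneg _) fun k => ?_).of_nonneg_of_le
      (fun p => integral_nonneg fun t => norm_nonneg _) fun p => ?_
    · have := poch_pos hc (k + 1); positivity
    · rw [integral_norm_betaExpansionTerm hc]
      exact mul_le_mul_of_nonneg_left (hmom p.1 p.2) (norm_nonneg _)
  have hsum := hasSum_integral_of_summable_integral_norm (integrableOn_betaExpansionTerm hc) hnorm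
  rw [intervalIntegral.integral_of_le zero_le_one, setIntegral_congr_fun measurableSet_Ioc
    fun t ht => tsum_betaExpansionTerm hA (hD _ (sub_nonneg.2 ht.2) (by linarith [ht.1])) ht]
  refine hsum.prod_fiberwise fun n => ?_
  simp only [integral_betaExpansionTerm hc]
  have hk : Summable fun k => D k * (k ! / poch (c + n) (k + 1)) := by
    refine Summable.of_norm_bounded hDc fun k => ?_
    have := poch_pos (by positivity : 0 < c + n) (k + 1)
    rw [Real.norm_eq_abs, abs_mul,
      abs_of_nonneg (by positivity : (0 : ℝ) ≤ k ! / poch (c + n) (k + 1))]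
    exact hmom n k
  exact (Complex.hasSum_ofReal.mpr hk.hasSum).mul_left (A n)

end BetaExpansion

lemma Gauss2F1Coeff_mul_beta_eq (a b c : ℝ) (k : ℕ) :
    a * b * Gauss2F1Coeff (a + 1) (b + 1) 2 k * (k ! / poch c (k + 1)) =
      Gauss2F1Coeff a b c (k + 1) := by
  have : (k ! : ℝ) ≠ 0 := Nat.cast_ne_zero.mpr k.factorial_ne_zero
  rw [Gauss2F1Coeff, Gauss2F1Coeff, poch_two, poch_succ_left a, poch_succ_left b,
    Nat.factorial_succ]
  push_cast
  field_simp

lemma tsum_Gauss2F1Coeff_mul_beta {a b c : ℝ} (hc : 0 < c) (h : a + b < c) :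
    ∑' k : ℕ, a * b * Gauss2F1Coeff (a + 1) (b + 1) 2 k * (k ! / poch c (k + 1)) =
      Gauss2F1 a b c 1 - 1 := by
  rw [Gauss2F1_one_eq_tsum, (summable_Gauss2F1Coeff hc h).tsum_eq_zero_add]
  simp only [Gauss2F1Coeff_mul_beta_eq]
  simp [Gauss2F1Coeff, poch_zero]

lemma tsum_binomial_mul_tsum_Gauss2F1Coeff {σ a b c : ℝ} {z : ℂ} (hz : ‖z‖ < 1) {t : ℝ}
    (ht : t ∈ Ioc (0 : ℝ) 1) :
    (∑' n, ((poch σ n / n ! : ℝ) : ℂ) * (-z) ^ n * (t : ℂ) ^ n) *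
        ((t ^ (c - 1) * ∑' k, a * b * Gauss2F1Coeff (a + 1) (b + 1) 2 k * (1 - t) ^ k : ℝ) : ℂ) =
      ((a * b : ℝ) : ℂ) * (t : ℂ) ^ ((c : ℂ) - 1) / (1 + z * t) ^ (σ : ℂ) *
        ((Gauss2F1 (a + 1) (b + 1) 2 (1 - t) : ℝ) : ℂ) := by
  have hzt : ‖z * t‖ < 1 := by
    rw [norm_mul, Complex.norm_real, Real.norm_of_nonneg ht.1.le]
    nlinarith [norm_nonneg z, ht.1, ht.2]
  have hbinomial : ∑' n, ((poch σ n / n ! : ℝ) : ℂ) * (-z) ^ n * (t : ℂ) ^ n =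
      (1 + z * t) ^ (-(σ : ℂ)) := by
    rw [← (hasSum_one_add_cpow_neg σ hzt).tsum_eq]
    exact tsum_congr fun n => by ring
  have hGauss : ∑' k, a * b * Gauss2F1Coeff (a + 1) (b + 1) 2 k * (1 - t) ^ k =
      a * b * Gauss2F1 (a + 1) (b + 1) 2 (1 - t) := by
    rw [Gauss2F1_eq_tsum, ← tsum_mul_left]
    exact tsum_congr fun k => by ring
  rw [hbinomial, hGauss, Complex.cpow_neg, Complex.ofReal_mul, Complex.ofReal_cpow ht.1.le]
  push_cast
  ring

theorem hasSum_integral_Gauss2F1 (σ : ℝ) {a b c : ℝ} (hc : 0 < c) (h : a + b < c) {z : ℂ}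
    (hz : ‖z‖ < 1) :
    HasSum (fun n => ((poch σ n / n ! : ℝ) : ℂ) * (-z) ^ n * ((Gauss2F1 a b (c + n) 1 - 1 : ℝ) : ℂ))
      (∫ t in (0 : ℝ)..1, ((a * b : ℝ) : ℂ) * (t : ℂ) ^ ((c : ℂ) - 1) / (1 + z * t) ^ (σ : ℂ) *
        ((Gauss2F1 (a + 1) (b + 1) 2 (1 - t) : ℝ) : ℂ)) := by
  set D : ℕ → ℝ := fun k => a * b * Gauss2F1Coeff (a + 1) (b + 1) 2 k
  have hD (x : ℝ) (hx₀ : 0 ≤ x) (hx : x < 1) : Summable fun k => |D k| * x ^ k :=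
    ((summable_abs_Gauss2F1Coeff_mul_pow (a + 1) (b + 1) two_pos hx₀ hx).mul_left |a * b|).congr
      fun k => by simp only [D, abs_mul]; ring
  have hDc : Summable fun k => |D k| * (k ! / poch c (k + 1)) := by
    refine ((summable_nat_add_iff 1).mpr (summable_abs_Gauss2F1Coeff hc h)).congr fun k => ?_
    have := poch_pos hc (k + 1)
    rw [← Gauss2F1Coeff_mul_beta_eq, abs_mul,
      abs_of_nonneg (by positivity : (0 : ℝ) ≤ k ! / poch c (k + 1))]
  have hI := hasSum_integral_mul_tsum_mul_tsum hc (summable_norm_binomial σ hz) hD hDc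
  rw [intervalIntegral.integral_of_le zero_le_one,
    setIntegral_congr_fun measurableSet_Ioc fun t ht => tsum_binomial_mul_tsum_Gauss2F1Coeff hz ht,
    ← intervalIntegral.integral_of_le zero_le_one] at hI
  have hn (n : ℕ) : a + b < c + n := by linarith [(n.cast_nonneg : (0 : ℝ) ≤ n)]
  simpa only [D, tsum_Gauss2F1Coeff_mul_beta (by positivity) (hn _)] using hI

lemma poch_ratio_eq_Gauss2F1 {a₁ a₂ b₁ b₂ : ℝ} (ha₁ : 0 < a₁) (ha₂ : 0 < a₂) (hb₁ : 0 < b₁)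
    (hb₂ : 0 < b₂) (hψ : b₁ + b₂ = a₁ + a₂) (n : ℕ) :
    poch a₁ n * poch a₂ n / (poch b₁ n * poch b₂ n) =
      Real.Gamma b₁ * Real.Gamma b₂ / (Real.Gamma a₁ * Real.Gamma a₂) *
        Gauss2F1 (b₁ - a₁) (b₂ - a₁) (a₂ + n) 1 := by
  have hn : (0 : ℝ) ≤ n := n.cast_nonneg
  rw [Gauss2F1_one (by positivity) (by linarith) (by linarith) (by linarith),
    show a₂ + n - (b₁ - a₁) - (b₂ - a₁) = a₁ + n by linarith,
    show a₂ + n - (b₁ - a₁) = b₂ + n by linarith, show a₂ + n - (b₂ - a₁) = b₁ + n by linarith,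
    Gamma_add_natCast ha₁, Gamma_add_natCast ha₂, Gamma_add_natCast hb₁, Gamma_add_natCast hb₂]
  have := Real.Gamma_pos_of_pos ha₁; have := Real.Gamma_pos_of_pos ha₂
  have := Real.Gamma_pos_of_pos hb₁; have := Real.Gamma_pos_of_pos hb₂
  have := poch_pos hb₁ n; have := poch_pos hb₂ n
  field_simp

theorem stmt15_general (σ a₁ a₂ b₁ b₂ : ℝ)
    (ha₁ : 0 < a₁) (ha₂ : 0 < a₂) (hb₁ : 0 < b₁) (hb₂ : 0 < b₂)
    (hψ : b₁ + b₂ = a₁ + a₂) (z : ℂ) (hz : ‖z‖ < 1) :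
    (∑' n : ℕ, ((poch σ n * poch a₁ n * poch a₂ n /
          (poch b₁ n * poch b₂ n * n.factorial) : ℝ) : ℂ) * (-z) ^ n) =
      ((Real.Gamma b₁ * Real.Gamma b₂ / (Real.Gamma a₁ * Real.Gamma a₂) : ℝ) : ℂ) *
        ((1 + z) ^ (-(σ : ℂ)) +
          ∫ t in (0:ℝ)..1,
            (((b₁ - a₁) * (b₂ - a₁) : ℝ) : ℂ) * (t : ℂ) ^ ((a₂ : ℂ) - 1) /
                (1 + z * (t : ℂ)) ^ (σ : ℂ) *
              ((Gauss2F1 (b₁ - a₁ + 1) (b₂ - a₁ + 1) 2 (1 - t) : ℝ) : ℂ)) := by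
  have hsum := ((hasSum_one_add_cpow_neg σ hz).add
    (hasSum_integral_Gauss2F1 σ ha₂ (by linarith : (b₁ - a₁) + (b₂ - a₁) < a₂) hz)).mul_left
    ((Real.Gamma b₁ * Real.Gamma b₂ / (Real.Gamma a₁ * Real.Gamma a₂) : ℝ) : ℂ)
  refine (tsum_congr fun n => ?_).trans hsum.tsum_eq
  rw [show poch σ n * poch a₁ n * poch a₂ n / (poch b₁ n * poch b₂ n * n.factorial) =
      poch σ n / n ! * (poch a₁ n * poch a₂ n / (poch b₁ n * poch b₂ n)) by ring,
    poch_ratio_eq_Gauss2F1 ha₁ ha₂ hb₁ hb₂ hψ n]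
  push_cast
  ring

/-- Representing measure of `₃F₂` in the boundary case `b₁ + b₂ = a₁ + a₂`:
a Dirac atom at `t = 1` plus an absolutely continuous part. -/
theorem stmt15 (σ a₁ a₂ b₁ b₂ : ℝ)
    (hσ : 0 < σ) (ha₁ : 0 < a₁) (ha₂ : 0 < a₂) (hb₁ : 0 < b₁) (hb₂ : 0 < b₂)
    (hψ : b₁ + b₂ = a₁ + a₂) (z : ℂ) (hz : ‖z‖ < 1) :
    (∑' n : ℕ, ((poch σ n * poch a₁ n * poch a₂ n /
          (poch b₁ n * poch b₂ n * n.factorial) : ℝ) : ℂ) * (-z) ^ n) =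
      ((Real.Gamma b₁ * Real.Gamma b₂ / (Real.Gamma a₁ * Real.Gamma a₂) : ℝ) : ℂ) *
        ((1 + z) ^ (-(σ : ℂ)) +
          ∫ t in (0:ℝ)..1,
            (((b₁ - a₁) * (b₂ - a₁) : ℝ) : ℂ) * (t : ℂ) ^ ((a₂ : ℂ) - 1) /
                (1 + z * (t : ℂ)) ^ (σ : ℂ) *
              ((Gauss2F1 (b₁ - a₁ + 1) (b₂ - a₁ + 1) 2 (1 - t) : ℝ) : ℂ)) :=
  stmt15_general σ a₁ a₂ b₁ b₂ ha₁ ha₂ hb₁ hb₂ hψ z hz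
end
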